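/- Suppose that the index set {1, …, n} is partitioned into two nonempty disjoint sets S₀ and S₋ such that for all x ∈ Ω: (1) d_j(J(x)) ≤ 0 for every j ∈ S₀; (2) d_k(J(x)) < 0 for every k ∈ S₋; and (3) for every j ∈ S₀ there exists an index z = z(j) ∈ S₋ such that J(x)_{j z} ≠ 0. Then the system ẋ = f(x) is SOST on Ω with respect to the L∞ norm: for every ε > 0 and every τ > 0 there exists ℓ = ℓ(τ, ε) > 0 such that for any t₁ ≥ 0, any two solutions u, v : [t₁, ∞) → Ω of ẋ = f(x), and any t₂ ≥ t₁, one has ‖u(t₂+τ) − v(t₂+τ)‖_∞ ≤ (1+ε)·exp(−ℓ(t₂−t₁))·‖u(t₁) − v(t₁)‖_∞. -/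

import Mathlib

open Filter Topology

/-- The Jacobian matrix of `f` at `x`: `(jac f x) i j = ∂f_i/∂x_j (x)`. -/
noncomputable def jac {n : ℕ} (f : (Fin n → ℝ) → (Fin n → ℝ)) (x : Fin n → ℝ) :
    Matrix (Fin n) (Fin n) ℝ :=
  fun i j => fderiv ℝ f x (Pi.single j 1) i

/-- `dRow A j = A_{jj} + Σ_{i ≠ j} |A_{ji}|`: the `j`-th row sum of `A` with the
off-diagonal entries replaced by their absolute values. -/
def dRow {n : ℕ} (A : Matrix (Fin n) (Fin n) ℝ) (j : Fin n) : ℝ :=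
  A j j + ∑ i ∈ Finset.univ.erase j, |A j i|

/-!
Weighting the coordinates in `Sm` by `1 + δ`, i.e. conjugating `J(x)` by the diagonal matrix
`D = diagonal (stepWeight Sm δ)`, turns the row conditions into a uniform strict bound
`dRow (D J(x) D⁻¹) j ≤ -c` on `Ω`, i.e. `μ∞(D J(x) D⁻¹) ≤ -c`: rows in `Sm` lose only
`O(δ)` of their margin, which compactness keeps positive for small `δ`, while rows in `S0` gain
`δ / (1 + δ)` times their coupling to `Sm`, which `h3` and compactness make uniformly positive.

In the weighted sup norm `‖D (u - v)‖` two solutions then approach each other at every rate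
`ℓ < c`: at a time where `e^{ℓ t} ‖D (u - v)‖` would reach a new maximum, the maximal coordinate
would have to be non-decreasing, whereas the mean value theorem on the segment `[v, u] ⊆ Ω`
bounds its derivative by `(ℓ - c)` times itself. Returning to the plain sup norm costs the
factor `1 + δ ≤ 1 + ε`.
-/

open Matrix Set

section MatrixMeasure

variable {n : ℕ}

theorem mulVec_apply_le_dRow_mul (B : Matrix (Fin n) (Fin n) ℝ) {y : Fin n → ℝ} {j : Fin n}
    (hy : ∀ i, |y i| ≤ y j) : (B *ᵥ y) j ≤ dRow B j * y j := by
  have hoff : ∀ i, B j i * y i ≤ |B j i| * y j := fun i =>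
    calc B j i * y i ≤ |B j i| * |y i| := (le_abs_self _).trans_eq (abs_mul _ _)
      _ ≤ |B j i| * y j := mul_le_mul_of_nonneg_left (hy i) (abs_nonneg _)
  rw [mulVec, dotProduct, ← Finset.add_sum_erase _ _ (Finset.mem_univ j), dRow, add_mul,
    Finset.sum_mul]
  exact add_le_add_right (Finset.sum_le_sum fun i _ => hoff i) _

theorem diagonal_mul_mul_diagonal_inv_mulVec {p : Fin n → ℝ} (hp : ∀ i, p i ≠ 0)
    (A : Matrix (Fin n) (Fin n) ℝ) (w : Fin n → ℝ) :
    (diagonal p * A * diagonal p⁻¹) *ᵥ (p * w) = p * (A *ᵥ w) := by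
  have hw : diagonal p⁻¹ *ᵥ (p * w) = w := by
    ext i; simp [mulVec_diagonal, inv_mul_cancel_left₀ (hp i)]
  ext i
  rw [← mulVec_mulVec, ← mulVec_mulVec, hw, mulVec_diagonal, Pi.mul_apply]

theorem dRow_diagonal_mul_mul_diagonal_inv {p : Fin n → ℝ} (hp : ∀ i, 0 < p i)
    (A : Matrix (Fin n) (Fin n) ℝ) (j : Fin n) :
    dRow (diagonal p * A * diagonal p⁻¹) j =
      A j j + ∑ i ∈ Finset.univ.erase j, p j / p i * |A j i| := by
  simp only [dRow, mul_diagonal, diagonal_mul, Pi.inv_apply, abs_mul, abs_inv,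
    abs_of_pos (hp _), mul_inv_cancel_right₀ (hp j).ne', mul_comm (p j) (A j j)]
  exact congrArg _ (Finset.sum_congr rfl fun i _ => by ring)

def stepWeight (s : Finset (Fin n)) (δ : ℝ) : Fin n → ℝ := fun i => if i ∈ s then 1 + δ else 1

variable {s : Finset (Fin n)} {δ : ℝ}

theorem one_le_stepWeight (hδ : 0 ≤ δ) (i : Fin n) : 1 ≤ stepWeight s δ i := by
  unfold stepWeight; split_ifs <;> linarith

theorem stepWeight_le (hδ : 0 ≤ δ) (i : Fin n) : stepWeight s δ i ≤ 1 + δ := by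
  unfold stepWeight; split_ifs <;> linarith

theorem stepWeight_pos (hδ : 0 ≤ δ) (i : Fin n) : 0 < stepWeight s δ i :=
  one_pos.trans_le (one_le_stepWeight hδ i)

theorem dRow_stepWeight_le_of_mem (hδ : 0 ≤ δ) (A : Matrix (Fin n) (Fin n) ℝ) {j : Fin n}
    (hj : j ∈ s) :
    dRow (diagonal (stepWeight s δ) * A * diagonal (stepWeight s δ)⁻¹) j ≤
      dRow A j + δ * ∑ i, |A j i| := by
  have hterm : ∀ i, stepWeight s δ j / stepWeight s δ i * |A j i| ≤ |A j i| + δ * |A j i| :=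
    fun i => calc
      _ ≤ (1 + δ) * |A j i| := by
          gcongr
          rw [show stepWeight s δ j = 1 + δ from if_pos hj]
          exact div_le_self (by linarith) (one_le_stepWeight hδ i)
      _ = |A j i| + δ * |A j i| := by ring
  have hsum : ∑ i ∈ Finset.univ.erase j, |A j i| ≤ ∑ i, |A j i| :=
    Finset.sum_le_sum_of_subset_of_nonneg (Finset.erase_subset _ _) fun i _ _ => abs_nonneg _
  rw [dRow_diagonal_mul_mul_diagonal_inv (stepWeight_pos hδ), dRow]
  calc _ ≤ A j j + ∑ i ∈ Finset.univ.erase j, (|A j i| + δ * |A j i|) :=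
        add_le_add_right (Finset.sum_le_sum fun i _ => hterm i) _
    _ ≤ _ := by
        rw [Finset.sum_add_distrib, ← Finset.mul_sum]
        nlinarith

theorem dRow_stepWeight_of_notMem (hδ : 0 ≤ δ) (A : Matrix (Fin n) (Fin n) ℝ) {j : Fin n}
    (hj : j ∉ s) :
    dRow (diagonal (stepWeight s δ) * A * diagonal (stepWeight s δ)⁻¹) j =
      dRow A j - δ / (1 + δ) * ∑ i ∈ s, |A j i| := by
  have hs : s ⊆ Finset.univ.erase j := fun i hi =>
    Finset.mem_erase.2 ⟨ne_of_mem_of_not_mem hi hj, Finset.mem_univ i⟩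
  have hterm : ∀ i ∈ Finset.univ.erase j, stepWeight s δ j / stepWeight s δ i * |A j i| =
      |A j i| - if i ∈ s then δ / (1 + δ) * |A j i| else 0 := by
    intro i _
    by_cases hi : i ∈ s
    · simp only [stepWeight, hi, hj, if_true, if_false]
      field_simp
      ring
    · simp [stepWeight, hi, hj]
  rw [dRow_diagonal_mul_mul_diagonal_inv (stepWeight_pos hδ), dRow, Finset.sum_congr rfl hterm,
    Finset.sum_sub_distrib, Finset.sum_ite_mem, Finset.inter_eq_right.2 hs, ← Finset.mul_sum]
  ring

theorem norm_le_norm_stepWeight_mul (hδ : 0 ≤ δ) (w : Fin n → ℝ) :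
    ‖w‖ ≤ ‖stepWeight s δ * w‖ := by
  refine (pi_norm_le_iff_of_nonneg (norm_nonneg _)).2 fun i => (norm_le_pi_norm _ i).trans' ?_
  rw [Pi.mul_apply, norm_mul]
  exact le_mul_of_one_le_left (norm_nonneg _)
    ((one_le_stepWeight hδ i).trans (Real.le_norm_self _))

theorem norm_stepWeight_mul_le (hδ : 0 ≤ δ) (w : Fin n → ℝ) :
    ‖stepWeight s δ * w‖ ≤ (1 + δ) * ‖w‖ := by
  refine (norm_mul_le _ _).trans (mul_le_mul_of_nonneg_right ?_ (norm_nonneg _))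
  refine (pi_norm_le_iff_of_nonneg (by linarith)).2 fun i => ?_
  rw [Real.norm_of_nonneg (stepWeight_pos hδ i).le]
  exact stepWeight_le hδ i

end MatrixMeasure

theorem IsCompact.exists_pos_le_of_pos {X ι : Type*} [TopologicalSpace X] {K : Set X}
    (hK : IsCompact K) {s : Finset ι} {g : ι → X → ℝ} (hg : ∀ k ∈ s, ContinuousOn (g k) K)
    (hpos : ∀ k ∈ s, ∀ x ∈ K, 0 < g k x) : ∃ m > 0, ∀ k ∈ s, ∀ x ∈ K, m ≤ g k x := by
  have hsmall : ∀ᶠ m in 𝓝[>] (0 : ℝ), ∀ k ∈ s, ∀ x ∈ K, m ≤ g k x := by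
    rw [eventually_all_finset]
    intro k hk
    obtain ⟨a, ha, hle⟩ := hK.exists_forall_le' (hg k hk) (hpos k hk)
    filter_upwards [Ioo_mem_nhdsGT ha] with m hm x hx using hm.2.le.trans (hle x hx)
  obtain ⟨m, hm, hm0⟩ := (hsmall.and self_mem_nhdsWithin).exists
  exact ⟨m, hm0, hm⟩

theorem ContinuousOn.matrix_elem {X m n R : Type*} [TopologicalSpace X] [TopologicalSpace R]
    {A : X → Matrix m n R} {K : Set X} (hA : ContinuousOn A K) (i : m) (j : n) :
    ContinuousOn (fun x => A x i j) K :=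
  (continuous_apply j).comp_continuousOn ((continuous_apply i).comp_continuousOn hA)

theorem IsCompact.exists_forall_sum_abs_le {X m n : Type*} [TopologicalSpace X] [Fintype m]
    [Fintype n] {K : Set X} (hK : IsCompact K) {A : X → Matrix m n ℝ} (hA : ContinuousOn A K) :
    ∃ M, ∀ x ∈ K, ∀ k, ∑ i, |A x k i| ≤ M := by
  obtain ⟨M, hM⟩ := hK.bddAbove_image (continuousOn_finsetSum Finset.univ fun k _ =>
    continuousOn_finsetSum Finset.univ fun i _ => (hA.matrix_elem k i).abs)
  exact ⟨M, fun x hx k =>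
    (Finset.single_le_sum (fun k _ => Finset.sum_nonneg fun i _ => abs_nonneg (A x k i))
      (Finset.mem_univ k)).trans (hM ⟨x, hx, rfl⟩)⟩

theorem eventually_exists_dRow_stepWeight_le {X : Type*} [TopologicalSpace X] {n : ℕ}
    {K : Set X} (hK : IsCompact K) {A : X → Matrix (Fin n) (Fin n) ℝ} (hA : ContinuousOn A K)
    {S0 Sm : Finset (Fin n)} (hcover : S0 ∪ Sm = Finset.univ)
    (h1 : ∀ x ∈ K, ∀ j ∈ S0, dRow (A x) j ≤ 0)
    (h2 : ∀ x ∈ K, ∀ k ∈ Sm, dRow (A x) k < 0)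
    (h3 : ∀ x ∈ K, ∀ j ∈ S0, ∃ z ∈ Sm, A x j z ≠ 0) :
    ∀ᶠ δ in 𝓝[>] (0 : ℝ), ∃ c > 0, ∀ x ∈ K, ∀ j,
      dRow (diagonal (stepWeight Sm δ) * A x * diagonal (stepWeight Sm δ)⁻¹) j ≤ -c := by
  have habsSum : ∀ (t : Finset (Fin n)) j, ContinuousOn (fun x => ∑ i ∈ t, |A x j i|) K :=
    fun t j => continuousOn_finsetSum _ fun i _ => (hA.matrix_elem j i).abs
  obtain ⟨m, hm, hdiag⟩ := hK.exists_pos_le_of_pos (s := Sm) (g := fun k x => -dRow (A x) k)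
    (fun k _ => ((hA.matrix_elem k k).add (habsSum _ k)).neg)
    fun k hk x hx => neg_pos.2 (h2 x hx k hk)
  obtain ⟨c₀, hc₀, hcoupling⟩ := hK.exists_pos_le_of_pos (s := S0)
    (g := fun j x => ∑ i ∈ Sm, |A x j i|) (fun j _ => habsSum Sm j) fun j hj x hx => by
      obtain ⟨z, hz, hne⟩ := h3 x hx j hj
      exact Finset.sum_pos' (fun i _ => abs_nonneg _) ⟨z, hz, abs_pos.2 hne⟩
  obtain ⟨M, hM⟩ := hK.exists_forall_sum_abs_le hA
  have hδM : ∀ᶠ δ in 𝓝[>] (0 : ℝ), δ * M < m :=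
    nhdsWithin_le_nhds <| (continuous_id.mul continuous_const).tendsto' 0 0 (by simp)
      |>.eventually_lt_const hm
  filter_upwards [hδM, self_mem_nhdsWithin] with δ hδM (hδ : 0 < δ)
  refine ⟨min (m - δ * M) (δ / (1 + δ) * c₀), lt_min (by linarith) (by positivity),
    fun x hx j => ?_⟩
  by_cases hj : j ∈ Sm
  · calc _ ≤ dRow (A x) j + δ * ∑ i, |A x j i| := dRow_stepWeight_le_of_mem hδ.le (A x) hj
      _ ≤ -m + δ * M :=
        add_le_add (by linarith [hdiag j hj x hx]) (mul_le_mul_of_nonneg_left (hM x hx j) hδ.le)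
      _ ≤ _ := by linarith [min_le_left (m - δ * M) (δ / (1 + δ) * c₀)]
  · have hj0 : j ∈ S0 := (Finset.mem_union.1 (hcover ▸ Finset.mem_univ j)).resolve_right hj
    calc _ = dRow (A x) j - δ / (1 + δ) * ∑ i ∈ Sm, |A x j i| :=
          dRow_stepWeight_of_notMem hδ.le (A x) hj
      _ ≤ 0 - δ / (1 + δ) * c₀ :=
        sub_le_sub (h1 x hx j hj0)
          (mul_le_mul_of_nonneg_left (hcoupling j hj0 x hx) (by positivity))
      _ ≤ _ := by linarith [min_le_right (m - δ * M) (δ / (1 + δ) * c₀)]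

theorem HasDerivWithinAt.nonneg_of_isMaxOn_Icc {g : ℝ → ℝ} {g' a b : ℝ} (hab : a < b)
    (hg : HasDerivWithinAt g g' (Icc a b) b) (hmax : IsMaxOn g (Icc a b) b) : 0 ≤ g' := by
  have hcone : a - b ∈ posTangentConeAt (Icc a b) b :=
    sub_mem_posTangentConeAt_of_segment_subset
      ((convex_Icc a b).segment_subset (right_mem_Icc.2 hab.le) (left_mem_Icc.2 hab.le))
  have := hmax.localize.hasFDerivWithinAt_nonpos hg.hasFDerivWithinAt hcone
  rw [ContinuousLinearMap.toSpanSingleton_apply, smul_eq_mul] at this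
  nlinarith

section Flow

variable {n : ℕ} {f : (Fin n → ℝ) → (Fin n → ℝ)}

theorem jac_mulVec (x w : Fin n → ℝ) : jac f x *ᵥ w = fderiv ℝ f x w := by
  have : jac f x = LinearMap.toMatrix' (fderiv ℝ f x : (Fin n → ℝ) →ₗ[ℝ] Fin n → ℝ) := by
    ext i j; simp [jac, LinearMap.toMatrix'_apply]
  rw [this, LinearMap.toMatrix'_mulVec]
  rfl

theorem continuous_jac (hf : ContDiff ℝ 1 f) : Continuous (jac f) :=
  continuous_pi fun _ => continuous_pi fun _ =>
    (continuous_apply _).comp ((hf.continuous_fderiv one_ne_zero).clm_apply continuous_const)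

variable {Ω : Set (Fin n → ℝ)} {p : Fin n → ℝ}

theorem mul_sub_apply_le_of_dRow_le (hconv : Convex ℝ Ω) (hf : Differentiable ℝ f)
    (hp : ∀ i, p i ≠ 0) {j : Fin n} {c : ℝ}
    (hc : ∀ x ∈ Ω, dRow (diagonal p * jac f x * diagonal p⁻¹) j ≤ c)
    {a b : Fin n → ℝ} (ha : a ∈ Ω) (hb : b ∈ Ω)
    (hj : ∀ i, |p i * (a i - b i)| ≤ p j * (a j - b j)) :
    p j * (f a j - f b j) ≤ c * (p j * (a j - b j)) := by
  obtain ⟨z, hz, hmvt⟩ := domain_mvt (f := fun x => f x j)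
    (fun x _ => (hasFDerivAt_pi'.1 (hf x).hasFDerivAt j).hasFDerivWithinAt) hconv hb ha
  set B := diagonal p * jac f z * diagonal p⁻¹
  calc p j * (f a j - f b j) = (B *ᵥ (p * (a - b))) j := by
        rw [hmvt, diagonal_mul_mul_diagonal_inv_mulVec hp, jac_mulVec]; rfl
    _ ≤ dRow B j * (p j * (a j - b j)) := mulVec_apply_le_dRow_mul B hj
    _ ≤ c * (p j * (a j - b j)) :=
        mul_le_mul_of_nonneg_right (hc z (hconv.segment_subset hb ha hz))
          ((abs_nonneg _).trans (hj j))

end Flow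

theorem exists_norm_eq_abs_apply {ι : Type*} [Fintype ι] {y : ι → ℝ} (hy : y ≠ 0) :
    ∃ j, ‖y‖ = |y j| := by
  obtain ⟨i₀, -⟩ := Function.ne_iff.1 hy
  obtain ⟨j, -, hj⟩ := Finset.exists_max_image Finset.univ (fun i => |y i|)
    ⟨i₀, Finset.mem_univ i₀⟩
  exact ⟨j, le_antisymm ((pi_norm_le_iff_of_nonneg (abs_nonneg _)).2 fun i =>
    hj i (Finset.mem_univ i)) (norm_le_pi_norm y j)⟩

section Decay

variable {n : ℕ} {f : (Fin n → ℝ) → (Fin n → ℝ)} {Ω : Set (Fin n → ℝ)} {p : Fin n → ℝ}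
  {c ℓ t₁ ts : ℝ} {u v : ℝ → Fin n → ℝ}

theorem not_isMaxOn_exp_mul_abs_mul_sub (hconv : Convex ℝ Ω) (hf : Differentiable ℝ f)
    (hp : ∀ i, p i ≠ 0) (hℓc : ℓ < c)
    (hrow : ∀ x ∈ Ω, ∀ j, dRow (diagonal p * jac f x * diagonal p⁻¹) j ≤ -c)
    (hts : t₁ < ts) (hu : u ts ∈ Ω) (hv : v ts ∈ Ω)
    (hu' : HasDerivWithinAt u (f (u ts)) (Ici t₁) ts)
    (hv' : HasDerivWithinAt v (f (v ts)) (Ici t₁) ts) {j : Fin n}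
    (hj : ∀ i, |p i * (u ts i - v ts i)| ≤ |p j * (u ts j - v ts j)|)
    (hpos : 0 < |p j * (u ts j - v ts j)|) :
    ¬ IsMaxOn (fun s => Real.exp (ℓ * (s - t₁)) * |p j * (u s j - v s j)|) (Icc t₁ ts) ts := by
  have hswap : ∀ s i, |p i * (v s i - u s i)| = |p i * (u s i - v s i)| := fun s i => by
    rw [← neg_sub, mul_neg, abs_neg]
  wlog hsign : 0 ≤ p j * (u ts j - v ts j) generalizing u v
  · simp only [← hswap] at hj hpos ⊢
    refine this hv hu hv' hu' hj hpos (fun s i => (hswap s i).symm) ?_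
    linarith [neg_sub (u ts j) (v ts j)]
  intro hmax
  replace hmax : IsMaxOn (fun s => Real.exp (ℓ * (s - t₁)) * (p j * (u s j - v s j)))
      (Icc t₁ ts) ts := fun s hs =>
    calc _ ≤ Real.exp (ℓ * (s - t₁)) * |p j * (u s j - v s j)| :=
          mul_le_mul_of_nonneg_left (le_abs_self _) (Real.exp_pos _).le
      _ ≤ _ := hmax hs
      _ = _ := congrArg (Real.exp (ℓ * (ts - t₁)) * ·) (abs_of_nonneg hsign)
  rw [abs_of_nonneg hsign] at hj hpos
  set E := Real.exp (ℓ * (ts - t₁))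
  have hexp : HasDerivAt (fun s => Real.exp (ℓ * (s - t₁))) (E * ℓ) ts := by
    simpa using (((hasDerivAt_id ts).sub_const t₁).const_mul ℓ).exp
  have hgap : HasDerivWithinAt (fun s => p j * (u s j - v s j))
      (p j * (f (u ts) j - f (v ts) j)) (Icc t₁ ts) ts :=
    (((hasDerivWithinAt_pi.1 hu' j).sub (hasDerivWithinAt_pi.1 hv' j)).const_mul (p j)).mono
      Icc_subset_Ici_self
  have hnonneg := (hexp.hasDerivWithinAt.mul hgap).nonneg_of_isMaxOn_Icc hts hmax
  have hmvt := mul_sub_apply_le_of_dRow_le hconv hf hp (fun x hx => hrow x hx j) hu hv hj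
  have hE : 0 < E := Real.exp_pos _
  nlinarith [mul_pos hE (mul_pos (sub_pos.2 hℓc) hpos)]

theorem not_isMaxOn_exp_mul_norm_mul_sub (hconv : Convex ℝ Ω) (hf : Differentiable ℝ f)
    (hp : ∀ i, p i ≠ 0) (hℓc : ℓ < c)
    (hrow : ∀ x ∈ Ω, ∀ j, dRow (diagonal p * jac f x * diagonal p⁻¹) j ≤ -c)
    (hts : t₁ < ts) (hu : u ts ∈ Ω) (hv : v ts ∈ Ω)
    (hu' : HasDerivWithinAt u (f (u ts)) (Ici t₁) ts)
    (hv' : HasDerivWithinAt v (f (v ts)) (Ici t₁) ts) (hne : p * (u ts - v ts) ≠ 0) :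
    ¬ IsMaxOn (fun s => Real.exp (ℓ * (s - t₁)) * ‖p * (u s - v s)‖) (Icc t₁ ts) ts := by
  intro hmax
  obtain ⟨j, hj⟩ := exists_norm_eq_abs_apply hne
  refine not_isMaxOn_exp_mul_abs_mul_sub hconv hf hp hℓc hrow hts hu hv hu' hv' (j := j)
    (fun i => (norm_le_pi_norm (p * (u ts - v ts)) i).trans hj.le) (hj ▸ norm_pos_iff.2 hne)
    fun s hs => ?_
  calc Real.exp (ℓ * (s - t₁)) * |p j * (u s j - v s j)|
      ≤ Real.exp (ℓ * (s - t₁)) * ‖p * (u s - v s)‖ :=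
        mul_le_mul_of_nonneg_left (norm_le_pi_norm (p * (u s - v s)) j) (Real.exp_pos _).le
    _ ≤ Real.exp (ℓ * (ts - t₁)) * ‖p * (u ts - v ts)‖ := hmax hs
    _ = Real.exp (ℓ * (ts - t₁)) * |p j * (u ts j - v ts j)| := by rw [hj]; rfl

theorem norm_mul_sub_le_exp_mul_of_dRow_le (hconv : Convex ℝ Ω) (hf : Differentiable ℝ f)
    (hp : ∀ i, p i ≠ 0) (hℓc : ℓ < c)
    (hrow : ∀ x ∈ Ω, ∀ j, dRow (diagonal p * jac f x * diagonal p⁻¹) j ≤ -c)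
    (hu : ∀ t ≥ t₁, u t ∈ Ω) (hu' : ∀ t ≥ t₁, HasDerivWithinAt u (f (u t)) (Ici t₁) t)
    (hv : ∀ t ≥ t₁, v t ∈ Ω) (hv' : ∀ t ≥ t₁, HasDerivWithinAt v (f (v t)) (Ici t₁) t)
    {T : ℝ} (hT : t₁ ≤ T) :
    ‖p * (u T - v T)‖ ≤ Real.exp (-ℓ * (T - t₁)) * ‖p * (u t₁ - v t₁)‖ := by
  set G : ℝ → ℝ := fun s => Real.exp (ℓ * (s - t₁)) * ‖p * (u s - v s)‖
  have hcont : ∀ w : ℝ → Fin n → ℝ, (∀ t ≥ t₁, HasDerivWithinAt w (f (w t)) (Ici t₁) t) →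
      ContinuousOn w (Icc t₁ T) := fun w hw t ht =>
    (hw t ht.1).continuousWithinAt.mono Icc_subset_Ici_self
  have hG : ContinuousOn G (Icc t₁ T) :=
    (Real.continuous_exp.comp_continuousOn (by fun_prop)).mul
      (continuousOn_const.mul ((hcont u hu').sub (hcont v hv'))).norm
  obtain ⟨ts, hts, hmax⟩ := isCompact_Icc.exists_isMaxOn (nonempty_Icc.2 hT) hG
  have hGts : G ts ≤ G t₁ := by
    rcases hts.1.eq_or_lt with rfl | hlt
    · exact le_rfl
    by_cases hne : p * (u ts - v ts) = 0
    · simp only [G, hne, norm_zero, mul_zero]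
      positivity
    exact (not_isMaxOn_exp_mul_norm_mul_sub hconv hf hp hℓc hrow hlt (hu ts hts.1) (hv ts hts.1)
      (hu' ts hts.1) (hv' ts hts.1) hne (hmax.on_subset (Icc_subset_Icc_right hts.2))).elim
  have hGT : Real.exp (ℓ * (T - t₁)) * ‖p * (u T - v T)‖ ≤ ‖p * (u t₁ - v t₁)‖ := by
    simpa [G] using (hmax (right_mem_Icc.2 hT)).trans hGts
  have hexp : Real.exp (-ℓ * (T - t₁)) * Real.exp (ℓ * (T - t₁)) = 1 := by
    rw [← Real.exp_add]; simp
  calc ‖p * (u T - v T)‖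
      = Real.exp (-ℓ * (T - t₁)) * (Real.exp (ℓ * (T - t₁)) * ‖p * (u T - v T)‖) := by
        rw [← mul_assoc, hexp, one_mul]
    _ ≤ _ := mul_le_mul_of_nonneg_left hGT (Real.exp_pos _).le

end Decay

theorem sost_Linf_from_row_conditions_general {n : ℕ}
    (Ω : Set (Fin n → ℝ)) (hcomp : IsCompact Ω) (hconv : Convex ℝ Ω)
    (f : (Fin n → ℝ) → (Fin n → ℝ)) (hf : ContDiff ℝ 1 f)
    (S0 Sm : Finset (Fin n)) (hcover : S0 ∪ Sm = Finset.univ)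
    (h1 : ∀ x ∈ Ω, ∀ j ∈ S0, dRow (jac f x) j ≤ 0)
    (h2 : ∀ x ∈ Ω, ∀ k ∈ Sm, dRow (jac f x) k < 0)
    (h3 : ∀ x ∈ Ω, ∀ j ∈ S0, ∃ z ∈ Sm, jac f x j z ≠ 0) :
    ∀ ε > (0:ℝ), ∀ τ > (0:ℝ), ∃ ℓ > (0:ℝ), ∀ t₁ ≥ (0:ℝ), ∀ u v : ℝ → (Fin n → ℝ),
      (∀ t ≥ t₁, u t ∈ Ω) → (∀ t ≥ t₁, HasDerivWithinAt u (f (u t)) (Set.Ici t₁) t) →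
      (∀ t ≥ t₁, v t ∈ Ω) → (∀ t ≥ t₁, HasDerivWithinAt v (f (v t)) (Set.Ici t₁) t) →
      ∀ t₂ ≥ t₁,
        ‖u (t₂ + τ) - v (t₂ + τ)‖ ≤
          (1 + ε) * Real.exp (-ℓ * (t₂ - t₁)) * ‖u t₁ - v t₁‖ := by
  intro ε hε τ hτ
  obtain ⟨δ, ⟨⟨c, hc, hrow⟩, hδε⟩, hδ : 0 < δ⟩ := (((eventually_exists_dRow_stepWeight_le hcomp
    (continuous_jac hf).continuousOn hcover h1 h2 h3).and
      (nhdsWithin_le_nhds (eventually_le_nhds hε))).and self_mem_nhdsWithin).exists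
  refine ⟨c / 2, half_pos hc, fun t₁ _ u v hu hu' hv hv' t₂ ht₂ => ?_⟩
  have hdecay := norm_mul_sub_le_exp_mul_of_dRow_le hconv (hf.differentiable one_ne_zero)
    (fun i => (stepWeight_pos hδ.le i).ne') (half_lt_self hc) hrow hu hu' hv hv'
    (T := t₂ + τ) (by linarith)
  calc ‖u (t₂ + τ) - v (t₂ + τ)‖ ≤ ‖stepWeight Sm δ * (u (t₂ + τ) - v (t₂ + τ))‖ :=
        norm_le_norm_stepWeight_mul hδ.le _
    _ ≤ Real.exp (-(c / 2) * (t₂ + τ - t₁)) * ‖stepWeight Sm δ * (u t₁ - v t₁)‖ := hdecay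
    _ ≤ Real.exp (-(c / 2) * (t₂ - t₁)) * ((1 + ε) * ‖u t₁ - v t₁‖) :=
        mul_le_mul (Real.exp_le_exp.2 (by nlinarith))
          ((norm_stepWeight_mul_le hδ.le _).trans (by gcongr)) (norm_nonneg _) (Real.exp_pos _).le
    _ = (1 + ε) * Real.exp (-(c / 2) * (t₂ - t₁)) * ‖u t₁ - v t₁‖ := by ring

/-- If `{1,…,n}` is partitioned into nonempty sets `S₀`, `S₋` with
`d_j(J(x)) ≤ 0` on `S₀`, `d_k(J(x)) < 0` on `S₋`, and for every `j ∈ S₀` some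
`z ∈ S₋` has `J(x)_{j z} ≠ 0`, then `ẋ = f(x)` is SOST on `Ω` w.r.t. the `L∞` norm
(which is the sup norm `‖·‖` on `Fin n → ℝ`). -/
theorem sost_Linf_from_row_conditions {n : ℕ}
    (Ω : Set (Fin n → ℝ)) (hcomp : IsCompact Ω) (hconv : Convex ℝ Ω)
    (f : (Fin n → ℝ) → (Fin n → ℝ)) (hf : ContDiff ℝ 1 f)
    (S0 Sm : Finset (Fin n)) (hS0 : S0.Nonempty) (hSm : Sm.Nonempty)
    (hdisj : Disjoint S0 Sm) (hcover : S0 ∪ Sm = Finset.univ)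
    (h1 : ∀ x ∈ Ω, ∀ j ∈ S0, dRow (jac f x) j ≤ 0)
    (h2 : ∀ x ∈ Ω, ∀ k ∈ Sm, dRow (jac f x) k < 0)
    (h3 : ∀ x ∈ Ω, ∀ j ∈ S0, ∃ z ∈ Sm, jac f x j z ≠ 0) :
    ∀ ε > (0:ℝ), ∀ τ > (0:ℝ), ∃ ℓ > (0:ℝ), ∀ t₁ ≥ (0:ℝ), ∀ u v : ℝ → (Fin n → ℝ),
      (∀ t ≥ t₁, u t ∈ Ω) → (∀ t ≥ t₁, HasDerivWithinAt u (f (u t)) (Set.Ici t₁) t) →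
      (∀ t ≥ t₁, v t ∈ Ω) → (∀ t ≥ t₁, HasDerivWithinAt v (f (v t)) (Set.Ici t₁) t) →
      ∀ t₂ ≥ t₁,
        ‖u (t₂ + τ) - v (t₂ + τ)‖ ≤
          (1 + ε) * Real.exp (-ℓ * (t₂ - t₁)) * ‖u t₁ - v t₁‖ :=
  sost_Linf_from_row_conditions_general Ω hcomp hconv f hf S0 Sm hcover h1 h2 h3
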